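/- In an episodic finite-horizon MDP with finite state type S, finite nonempty action type A, horizon H, transition kernels P, and rewards r, any policy that is greedy with respect to the optimal values is optimal: if d : Fin H → S → A satisfies, for every stage h < H and state s, r h s (d h s) + E_{s' ~ P h s (d h s)}[ V*_{h+1}(s') ] = max_{a ∈ A} ( r h s a + E_{s' ~ P h s a}[ V*_{h+1}(s') ] ), then V^d_h(s) = V*_h(s) for every h ≤ H and every state s. -/

import Mathlib

open scoped BigOperators

noncomputable section

/-- Expectation of a real-valued function under a probability mass function. -/
noncomputable def pexp {α : Type} (p : PMF α) (f : α → ℝ) : ℝ :=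
  ∑' a, (p a).toReal * f a

variable {S A : Type} [Fintype S] [Nonempty S] [Fintype A] [Nonempty A] {H : ℕ}

/-- Trajectory distribution of an episodic MDP: `traj P π n h s` is the
distribution over the list of (state, action) pairs produced over the next
`n` stages, starting at stage `h` in state `s`, when at each stage `t` the
action is sampled from `π t s_t` and the next state from `P t s_t a_t`. -/
noncomputable def traj (P : Fin H → S → A → PMF S) (π : Fin H → S → PMF A) :
    ℕ → ℕ → S → PMF (List (S × A))
  | 0, _, _ => PMF.pure []
  | n + 1, h, s =>
    if hlt : h < H then
      (π ⟨h, hlt⟩ s).bind fun a =>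
        (P ⟨h, hlt⟩ s a).bind fun s' =>
          (traj P π n (h + 1) s').map fun l => (s, a) :: l
    else PMF.pure []

/-- Cumulative reward `∑_{t=h}^{H-1} r t s_t a_t` of a trajectory whose first
entry corresponds to stage `h`. -/
noncomputable def cumReward (r : Fin H → S → A → ℝ) (h : ℕ)
    (l : List (S × A)) : ℝ :=
  ((l.zipIdx.map Prod.swap).map fun p =>
    if hlt : h + p.1 < H then r ⟨h + p.1, hlt⟩ p.2.1 p.2.2 else 0).sum

/-- Value `V^π_h(s)`: the trajectory expectation of the cumulative reward
from stage `h` onward, started at `s_h = s`. -/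
noncomputable def value (P : Fin H → S → A → PMF S) (r : Fin H → S → A → ℝ)
    (π : Fin H → S → PMF A) (h : ℕ) (s : S) : ℝ :=
  pexp (traj P π (H - h) h s) (cumReward r h)

end

/-- The deterministic policy `d : Fin H → S → A`, viewed as the randomized
policy assigning the point mass at `d h s`. -/
noncomputable def detPolicy {S A : Type} {H : ℕ} (d : Fin H → S → A) :
    Fin H → S → PMF A := fun h s => PMF.pure (d h s)

/-- The optimal value function `V*_h(s) := ⨆_π V^π_h(s)`, supremum over all
Markov randomized policies. -/
noncomputable def Vstar {S A : Type} [Fintype S] [Nonempty S] [Fintype A]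
    [Nonempty A] {H : ℕ} (P : Fin H → S → A → PMF S)
    (r : Fin H → S → A → ℝ) (h : ℕ) (s : S) : ℝ :=
  ⨆ π : Fin H → S → PMF A, value P r π h s

section PexpLemmas

variable {α β : Type}

lemma pexp_summable (p : PMF α) {f : α → ℝ} {c : ℝ} (hf : ∀ x, |f x| ≤ c) :
    Summable fun x => (p x).toReal * f x := by
  apply Summable.of_norm_bounded (g := fun x => (p x).toReal * c)
  · exact (ENNReal.summable_toReal (by simp [p.tsum_coe])).mul_right c
  · intro x
    rw [Real.norm_eq_abs, abs_mul, abs_of_nonneg ENNReal.toReal_nonneg]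
    exact mul_le_mul_of_nonneg_left (hf x) ENNReal.toReal_nonneg

lemma tsum_toReal_pmf (p : PMF α) : ∑' a, (p a).toReal = 1 := by
  rw [← ENNReal.tsum_toReal_eq fun a => p.apply_ne_top a, p.tsum_coe, ENNReal.toReal_one]

lemma pexp_const (p : PMF α) (c : ℝ) : pexp p (fun _ => c) = c := by
  unfold pexp
  rw [tsum_mul_right, tsum_toReal_pmf, one_mul]

lemma pexp_mono (p : PMF α) {f g : α → ℝ} {c₁ c₂ : ℝ} (hf : ∀ x, |f x| ≤ c₁)
    (hg : ∀ x, |g x| ≤ c₂) (h : ∀ x, f x ≤ g x) : pexp p f ≤ pexp p g :=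
  Summable.tsum_le_tsum (fun x => mul_le_mul_of_nonneg_left (h x) ENNReal.toReal_nonneg)
    (pexp_summable p hf) (pexp_summable p hg)

lemma pexp_abs_le (p : PMF α) {f : α → ℝ} {c : ℝ} (hc : 0 ≤ c) (hf : ∀ x, |f x| ≤ c) :
    |pexp p f| ≤ c := by
  have hs : Summable fun x => ‖(p x).toReal * f x‖ := by
    simpa only [Real.norm_eq_abs] using (pexp_summable p hf).abs
  have h1 : |pexp p f| ≤ ∑' x, |(p x).toReal * f x| := by
    simpa only [Real.norm_eq_abs, pexp] using norm_tsum_le_tsum_norm hs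
  have h2 : ∑' x, |(p x).toReal * f x| ≤ ∑' x, (p x).toReal * c := by
    apply Summable.tsum_le_tsum _ ((pexp_summable p hf).abs) (pexp_summable p (fun _ => by
      rw [abs_of_nonneg hc]))
    intro x
    rw [abs_mul, abs_of_nonneg ENNReal.toReal_nonneg]
    exact mul_le_mul_of_nonneg_left (hf x) ENNReal.toReal_nonneg
  have h3 : ∑' x, (p x).toReal * c = c := by
    rw [tsum_mul_right, tsum_toReal_pmf, one_mul]
  linarith

lemma pexp_pure (a : α) (f : α → ℝ) : pexp (PMF.pure a) f = f a := by
  unfold pexp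
  rw [tsum_eq_single a]
  · simp [PMF.pure_apply]
  · intro b hb
    simp [PMF.pure_apply, hb]

lemma pexp_const_add (p : PMF α) (c : ℝ) {f : α → ℝ} {cf : ℝ} (hf : ∀ x, |f x| ≤ cf) :
    pexp p (fun x => c + f x) = c + pexp p f := by
  unfold pexp
  have h1 : Summable fun x => (p x).toReal * c :=
    (ENNReal.summable_toReal (by simp [p.tsum_coe])).mul_right c
  have h2 := pexp_summable p hf
  calc ∑' x, (p x).toReal * (c + f x)
      = ∑' x, ((p x).toReal * c + (p x).toReal * f x) := by
        apply tsum_congr; intro x; ring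
    _ = (∑' x, (p x).toReal * c) + ∑' x, (p x).toReal * f x := Summable.tsum_add h1 h2
    _ = c + ∑' x, (p x).toReal * f x := by rw [tsum_mul_right, tsum_toReal_pmf, one_mul]

lemma pexp_bind (p : PMF α) (f : α → PMF β) {g : β → ℝ} {c : ℝ} (hg : ∀ b, |g b| ≤ c) :
    pexp (p.bind f) g = pexp p fun a => pexp (f a) g := by
  unfold pexp
  have key : ∀ b, ((p.bind f) b).toReal * g b
      = ∑' a, (p a).toReal * ((f a b).toReal * g b) := by
    intro b
    rw [PMF.bind_apply, ENNReal.tsum_toReal_eq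
      (fun a => ENNReal.mul_ne_top (p.apply_ne_top a) ((f a).apply_ne_top b)),
      ← tsum_mul_right]
    apply tsum_congr; intro a
    rw [ENNReal.toReal_mul]; ring
  have hsum : Summable (Function.uncurry fun a b => (p a).toReal * ((f a b).toReal * g b)) := by
    apply Summable.of_norm_bounded
      (g := fun q : α × β => (p q.1 * f q.1 q.2).toReal * c)
    · apply Summable.mul_right
      apply ENNReal.summable_toReal
      rw [ENNReal.tsum_prod (f := fun a b => p a * f a b)]
      simp [ENNReal.tsum_mul_left, (f _).tsum_coe, p.tsum_coe]
    · rintro ⟨a, b⟩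
      simp only [Function.uncurry, Real.norm_eq_abs, ENNReal.toReal_mul, abs_mul,
        abs_of_nonneg ENNReal.toReal_nonneg, mul_assoc]
      exact mul_le_mul_of_nonneg_left
        (mul_le_mul_of_nonneg_left (hg b) ENNReal.toReal_nonneg) ENNReal.toReal_nonneg
  calc ∑' b, ((p.bind f) b).toReal * g b
      = ∑' b, ∑' a, (p a).toReal * ((f a b).toReal * g b) := tsum_congr key
    _ = ∑' a, ∑' b, (p a).toReal * ((f a b).toReal * g b) := Summable.tsum_comm hsum
    _ = ∑' a, (p a).toReal * ∑' b, (f a b).toReal * g b := by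
        apply tsum_congr; intro a; exact tsum_mul_left

lemma pexp_map (p : PMF α) (f : α → β) {g : β → ℝ} {c : ℝ} (hg : ∀ b, |g b| ≤ c) :
    pexp (p.map f) g = pexp p fun a => g (f a) := by
  rw [PMF.map, pexp_bind p _ hg]
  apply tsum_congr; intro a
  simp only [Function.comp_apply, pexp_pure]

end PexpLemmas

-- ========== auxiliary lemmas ==========

section Aux

variable {S A : Type} [Fintype S] [Nonempty S] [Fintype A] [Nonempty A] {H : ℕ}
variable (P : Fin H → S → A → PMF S) (r : Fin H → S → A → ℝ)

lemma sum_map_enumFrom_succ {α : Type} (f : ℕ → α → ℝ) : ∀ (l : List α) (n : ℕ),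
    (((l.zipIdx (n+1)).map Prod.swap).map fun p => f p.1 p.2).sum
      = (((l.zipIdx n).map Prod.swap).map fun p => f (p.1+1) p.2).sum
  | [], n => by simp
  | x :: l, n => by
    simp only [List.zipIdx_cons, List.map_cons, List.sum_cons, Prod.swap_prod_mk]
    rw [sum_map_enumFrom_succ f l (n+1)]

lemma cumReward_nil (h : ℕ) : cumReward r h ([] : List (S × A)) = 0 := by
  simp [cumReward]

lemma cumReward_cons (h : ℕ) (s : S) (a : A) (l : List (S × A)) :
    cumReward r h ((s, a) :: l)
      = (if hlt : h < H then r ⟨h, hlt⟩ s a else 0) + cumReward r (h+1) l := by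
  unfold cumReward
  simp only [List.zipIdx_cons, List.map_cons, List.sum_cons, Prod.swap_prod_mk]
  rw [sum_map_enumFrom_succ (fun i x => if hlt : h + i < H then r ⟨h + i, hlt⟩ x.1 x.2 else 0) l 0]
  simp only [Nat.add_zero]
  congr 1
  apply congrArg
  apply List.map_congr_left
  intro p _
  have e : h + (p.1 + 1) = h + 1 + p.1 := by omega
  rw [e]

lemma cumReward_abs_le {C : ℝ} (hC0 : 0 ≤ C) (hC : ∀ (t : Fin H) s a, |r t s a| ≤ C) :
    ∀ (l : List (S × A)) (h : ℕ), |cumReward r h l| ≤ ((H - h : ℕ) : ℝ) * C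
  | [], h => by rw [cumReward_nil]; simp; positivity
  | (x :: l), h => by
    rcases x with ⟨s, a⟩
    rw [cumReward_cons]
    have ih := cumReward_abs_le hC0 hC l (h+1)
    refine le_trans (abs_add_le _ _) ?_
    by_cases hlt : h < H
    · rw [dif_pos hlt]
      have h1 : ((H - (h+1) : ℕ) : ℝ) + 1 = ((H - h : ℕ) : ℝ) := by
        have : (H - (h+1)) + 1 = H - h := by omega
        exact_mod_cast congrArg (Nat.cast : ℕ → ℝ) this
      have := hC ⟨h, hlt⟩ s a
      nlinarith
    · rw [dif_neg hlt]
      have h1 : (H - (h+1) : ℕ) = (H - h : ℕ) := by omega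
      rw [h1] at ih
      simpa using ih

lemma cumReward_abs_le' {C : ℝ} (hC0 : 0 ≤ C) (hC : ∀ (t : Fin H) s a, |r t s a| ≤ C)
    (h : ℕ) (l : List (S × A)) : |cumReward r h l| ≤ (H : ℝ) * C := by
  refine le_trans (cumReward_abs_le r hC0 hC l h) ?_
  have : ((H - h : ℕ) : ℝ) ≤ (H : ℝ) := by exact_mod_cast Nat.sub_le H h
  nlinarith

lemma value_eq_zero (π : Fin H → S → PMF A) {h : ℕ} (hh : H ≤ h) (s : S) :
    value P r π h s = 0 := by
  unfold value
  rw [show H - h = 0 from by omega]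
  simp only [traj, pexp_pure, cumReward_nil]

lemma value_abs_le {C : ℝ} (hC0 : 0 ≤ C) (hC : ∀ (t : Fin H) s a, |r t s a| ≤ C)
    (π : Fin H → S → PMF A) (h : ℕ) (s : S) : |value P r π h s| ≤ (H : ℝ) * C := by
  unfold value
  exact pexp_abs_le _ (by positivity) (cumReward_abs_le' r hC0 hC h)

lemma bellman {C : ℝ} (hC0 : 0 ≤ C) (hC : ∀ (t : Fin H) s a, |r t s a| ≤ C)
    (π : Fin H → S → PMF A) {h : ℕ} (hlt : h < H) (s : S) :
    value P r π h s = pexp (π ⟨h, hlt⟩ s)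
      (fun a => r ⟨h, hlt⟩ s a + pexp (P ⟨h, hlt⟩ s a) fun s' => value P r π (h+1) s') := by
  have hb : ∀ h' : ℕ, ∀ l, |cumReward r h' l| ≤ (H : ℝ) * C :=
    fun h' l => cumReward_abs_le' r hC0 hC h' l
  conv_lhs => rw [value, show H - h = (H - (h+1)) + 1 from by omega]
  rw [traj, dif_pos hlt, pexp_bind _ _ (hb h)]
  refine congrArg _ (funext fun a => ?_)
  rw [pexp_bind _ _ (hb h)]
  have step : ∀ s', pexp ((traj P π (H-(h+1)) (h+1) s').map fun l => (s, a) :: l)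
      (cumReward r h) = r ⟨h, hlt⟩ s a + value P r π (h+1) s' := by
    intro s'
    rw [pexp_map _ _ (hb h)]
    have hfun : (fun l => cumReward r h ((s, a) :: l))
        = fun l => r ⟨h, hlt⟩ s a + cumReward r (h+1) l := by
      funext l; rw [cumReward_cons, dif_pos hlt]
    rw [hfun, pexp_const_add _ _ (hb (h+1))]
    rfl
  calc pexp (P ⟨h, hlt⟩ s a)
        (fun s' => pexp ((traj P π (H-(h+1)) (h+1) s').map fun l => (s, a) :: l)
          (cumReward r h))
      = pexp (P ⟨h, hlt⟩ s a) (fun s' => r ⟨h, hlt⟩ s a + value P r π (h+1) s') :=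
        congrArg _ (funext step)
    _ = r ⟨h, hlt⟩ s a + pexp (P ⟨h, hlt⟩ s a) (fun s' => value P r π (h+1) s') :=
        pexp_const_add _ _ (fun s' => value_abs_le P r hC0 hC π (h+1) s')

lemma policies_nonempty : Nonempty (Fin H → S → PMF A) :=
  ⟨fun _ _ => PMF.pure (Classical.arbitrary A)⟩

lemma vstar_eq_zero {h : ℕ} (hh : H ≤ h) (s : S) : Vstar P r h s = 0 := by
  haveI := policies_nonempty (S := S) (A := A) (H := H)
  calc Vstar P r h s = ⨆ _ : (Fin H → S → PMF A), (0 : ℝ) :=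
        iSup_congr fun π => value_eq_zero P r π hh s
    _ = 0 := ciSup_const

lemma value_bddAbove {C : ℝ} (hC0 : 0 ≤ C) (hC : ∀ (t : Fin H) s a, |r t s a| ≤ C)
    (h : ℕ) (s : S) : BddAbove (Set.range fun π : Fin H → S → PMF A => value P r π h s) := by
  refine ⟨(H : ℝ) * C, ?_⟩
  rintro _ ⟨π, rfl⟩
  exact (abs_le.1 (value_abs_le P r hC0 hC π h s)).2

lemma vstar_abs_le {C : ℝ} (hC0 : 0 ≤ C) (hC : ∀ (t : Fin H) s a, |r t s a| ≤ C)
    (h : ℕ) (s : S) : |Vstar P r h s| ≤ (H : ℝ) * C := by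
  haveI := policies_nonempty (S := S) (A := A) (H := H)
  rw [abs_le]
  constructor
  · refine le_trans ?_ (le_ciSup (value_bddAbove P r hC0 hC h s)
      (fun _ _ => PMF.pure (Classical.arbitrary A)))
    exact (abs_le.1 (value_abs_le P r hC0 hC _ h s)).1
  · exact ciSup_le fun π => (abs_le.1 (value_abs_le P r hC0 hC π h s)).2

end Aux

/-- Any policy that is greedy with respect to the optimal values is optimal:
if `d` maximizes `r h s a + E_{s' ~ P h s a}[V*_{h+1}(s')]` at every stage and
state, then `V^d_h(s) = V*_h(s)` for all `h ≤ H` and `s`. -/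
theorem greedy_wrt_optimal_values_is_optimal {S A : Type} [Fintype S]
    [Nonempty S] [Fintype A] [Nonempty A] {H : ℕ}
    (P : Fin H → S → A → PMF S) (r : Fin H → S → A → ℝ)
    (d : Fin H → S → A)
    (hgreedy : ∀ (h : Fin H) (s : S),
      r h s (d h s) + pexp (P h s (d h s)) (fun s' => Vstar P r (h + 1) s') =
        ⨆ a : A, (r h s a + pexp (P h s a) fun s' => Vstar P r (h + 1) s')) :
    ∀ h : ℕ, h ≤ H → ∀ s : S,
      value P r (detPolicy d) h s = Vstar P r h s := by
  haveI := policies_nonempty (S := S) (A := A) (H := H)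
  obtain ⟨C0, hC0⟩ := Finite.exists_le fun x : Fin H × S × A => |r x.1 x.2.1 x.2.2|
  set C : ℝ := max C0 0 with hCdef
  have hC : ∀ (t : Fin H) (s : S) (a : A), |r t s a| ≤ C :=
    fun t s a => le_trans (hC0 (t, s, a)) (le_max_left _ _)
  have hCnn : (0 : ℝ) ≤ C := le_max_right _ _
  suffices key : ∀ n h, H - h ≤ n → h ≤ H → ∀ s : S,
      value P r (detPolicy d) h s = Vstar P r h s by
    intro h hh s; exact key (H - h) h le_rfl hh s
  intro n
  induction n with
  | zero =>
    intro h hn hh s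
    rw [value_eq_zero P r _ (by omega) s, vstar_eq_zero P r (by omega) s]
  | succ n ih =>
    intro h hn hh s
    by_cases hlt : h < H
    · have hIH : ∀ s', value P r (detPolicy d) (h+1) s' = Vstar P r (h+1) s' :=
        fun s' => ih (h+1) (by omega) (by omega) s'
      set g : A → ℝ := fun a =>
        r ⟨h, hlt⟩ s a + pexp (P ⟨h, hlt⟩ s a) fun s' => Vstar P r (h+1) s' with hgdef
      have hVb : ∀ s', |Vstar P r (h+1) s'| ≤ (H : ℝ) * C :=
        fun s' => vstar_abs_le P r hCnn hC (h+1) s'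
      have hgb : ∀ a, |g a| ≤ C + (H : ℝ) * C := by
        intro a
        refine le_trans (abs_add_le _ _) (add_le_add (hC _ _ _) ?_)
        exact pexp_abs_le _ (by positivity) hVb
      -- (a): value of d at h equals ⨆ a, g a
      have h1 : value P r (detPolicy d) h s = ⨆ a, g a := by
        rw [bellman P r hCnn hC (detPolicy d) hlt s,
          show detPolicy d ⟨h, hlt⟩ s = PMF.pure (d ⟨h, hlt⟩ s) from rfl, pexp_pure]
        have hg := hgreedy ⟨h, hlt⟩ s
        simp only [Fin.val_mk] at hg
        rw [show (fun s' => value P r (detPolicy d) (h+1) s') =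
          fun s' => Vstar P r (h+1) s' from funext hIH]
        exact hg
      -- (c): value of d at h is at most Vstar
      have h2 : value P r (detPolicy d) h s ≤ Vstar P r h s :=
        le_ciSup (value_bddAbove P r hCnn hC h s) (detPolicy d)
      -- (b): Vstar at h is at most ⨆ a, g a
      have h3 : Vstar P r h s ≤ ⨆ a, g a := by
        apply ciSup_le
        intro π
        rw [bellman P r hCnn hC π hlt s]
        have hfb : ∀ a, |r ⟨h, hlt⟩ s a +
            pexp (P ⟨h, hlt⟩ s a) (fun s' => value P r π (h+1) s')| ≤ C + (H : ℝ) * C := by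
          intro a
          refine le_trans (abs_add_le _ _) (add_le_add (hC _ _ _) ?_)
          exact pexp_abs_le _ (by positivity)
            (fun s' => value_abs_le P r hCnn hC π (h+1) s')
        have step1 : pexp (π ⟨h, hlt⟩ s)
            (fun a => r ⟨h, hlt⟩ s a + pexp (P ⟨h, hlt⟩ s a)
              (fun s' => value P r π (h+1) s')) ≤ pexp (π ⟨h, hlt⟩ s) g := by
          refine pexp_mono _ hfb hgb ?_
          intro a
          refine add_le_add_right (pexp_mono _
            (fun s' => value_abs_le P r hCnn hC π (h+1) s') hVb
            (fun s' => le_ciSup (value_bddAbove P r hCnn hC (h+1) s') π)) _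
        have hsupb : BddAbove (Set.range g) := Set.Finite.bddAbove (Set.finite_range g)
        have step2 : pexp (π ⟨h, hlt⟩ s) g ≤ ⨆ a, g a := by
          refine le_trans (pexp_mono _ hgb (c₂ := |⨆ a, g a|)
            (fun _ => le_rfl) (fun a => le_ciSup hsupb a)) ?_
          rw [pexp_const]
        exact le_trans step1 step2
      linarith
    · have hh' : H ≤ h := by omega
      rw [value_eq_zero P r _ hh' s, vstar_eq_zero P r hh' s]
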